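/- Let 1 ≤ m ≤ n and let A : {0,1}^m → ℝ be a probability density (A ≥ 0, Σ_x A(x) = 1) satisfying E_A[x_S] = 2^{−|S|} for every S ⊆ [m] with |S| < m. Then for any two distinct subsets I, J ⊆ [n] with |I| = |J| = m, the total variation distance satisfies d_TV(D_I, D_J) = (1/2) Σ_{x∈{0,1}^n} |D_I(x) − D_J(x)| = |δ(A)| · 2^{m−1}, where δ(A) := A(1,…,1) − 2^{−m}. -/
import Mathlib


/-- The `S`-moment `E_A[x_S]` of a function `A` on `{0,1}^m`. -/
noncomputable def momentOf {m : ℕ} (A : (Fin m → Bool) → ℝ) (S : Finset (Fin m)) : ℝ :=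
  ∑ x ∈ Finset.univ.filter (fun x : Fin m → Bool => ∀ i ∈ S, x i = true), A x

/-- The density `D_I` on `{0,1}^n` obtained by placing `A` on the coordinates `I` (listed in
increasing order) and the uniform distribution on the remaining coordinates:
`D_I(x) = A(x_I) · 2^{-(n-m)}`. -/
noncomputable def embedDensity {n m : ℕ} (A : (Fin m → Bool) → ℝ)
    (I : Finset (Fin n)) (hI : I.card = m) : (Fin n → Bool) → ℝ :=
  fun x => A (fun t => x (I.orderIsoOfFin hI t).1) * (1/2 : ℝ) ^ (n - m)

noncomputable def chi : Bool → ℝ := fun b => if b then 1 else -1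

lemma chi_sq (b : Bool) : chi b * chi b = 1 := by cases b <;> simp [chi]

lemma sum_prod_bool {m : ℕ} (F : Fin m → Bool → ℝ) :
    ∑ x : Fin m → Bool, ∏ i, F i (x i) = ∏ i, (F i true + F i false) := by
  have h := Finset.prod_univ_sum (fun _ : Fin m => (Finset.univ : Finset Bool)) F
  rw [Fintype.piFinset_univ] at h
  rw [← h]
  congr 1
  ext i
  simp [Fintype.sum_bool]

lemma momentOf_eq {m : ℕ} (f : (Fin m → Bool) → ℝ) (S : Finset (Fin m)) :
    momentOf f S
      = ∑ x : Fin m → Bool, (∏ i, if i ∈ S then (if x i then (1:ℝ) else 0) else 1) * f x := by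
  rw [momentOf, Finset.sum_filter]
  congr 1
  ext x
  by_cases h : ∀ i ∈ S, x i = true
  · rw [if_pos h]
    have : (∏ i, if i ∈ S then (if x i then (1:ℝ) else 0) else 1) = 1 := by
      apply Finset.prod_eq_one
      intro i _
      by_cases hi : i ∈ S
      · simp [hi, h i hi]
      · simp [hi]
    rw [this, one_mul]
  · rw [if_neg h]
    push_neg at h
    obtain ⟨i, hi, hxi⟩ := h
    have : (∏ i, if i ∈ S then (if x i then (1:ℝ) else 0) else 1) = 0 := by
      apply Finset.prod_eq_zero (Finset.mem_univ i)
      simp [hi, hxi]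
    rw [this, zero_mul]

lemma momentOf_const {m : ℕ} (c : ℝ) (S : Finset (Fin m)) :
    momentOf (fun _ => c) S = c * 2 ^ (m - S.card) := by
  rw [momentOf_eq]
  simp only [mul_comm _ c, ← Finset.mul_sum]
  congr 1
  rw [sum_prod_bool (fun i b => if i ∈ S then (if b then (1:ℝ) else 0) else 1)]
  have h2 : ∀ i : Fin m, ((if i ∈ S then (if (true:Bool) then (1:ℝ) else 0) else 1)
      + (if i ∈ S then (if (false:Bool) then (1:ℝ) else 0) else 1)) = if i ∈ S then 1 else 2 := by
    intro i; by_cases hi : i ∈ S <;> simp [hi]; norm_num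
  rw [Finset.prod_congr rfl (fun i _ => h2 i)]
  rw [← Finset.prod_filter_mul_prod_filter_not Finset.univ (· ∈ S)]
  have hS : Finset.univ.filter (· ∈ S) = S := by ext i; simp
  rw [Finset.prod_congr hS (fun i hi => if_pos (by simpa using hi)),
      Finset.prod_congr rfl (fun i hi => if_neg (by simpa using (Finset.mem_filter.mp hi).2))]
  simp only [Finset.prod_const, Finset.prod_const_one, one_mul]
  have hc : Finset.univ.filter (fun x : Fin m => x ∉ S) = Sᶜ := by
    ext i; simp
  rw [hc, Finset.card_compl]
  simp


lemma momentOf_chiProd {m : ℕ} (S : Finset (Fin m)) (hS : S ≠ Finset.univ) :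
    momentOf (fun x => ∏ i, chi (x i)) S = 0 := by
  rw [momentOf_eq]
  have h1 : ∀ x : Fin m → Bool,
      (∏ i, if i ∈ S then (if x i then (1:ℝ) else 0) else 1) * (∏ i, chi (x i))
      = ∏ i, (if i ∈ S then (if x i then (1:ℝ) else 0) else 1) * chi (x i) := by
    intro x; rw [← Finset.prod_mul_distrib]
  rw [Finset.sum_congr rfl (fun x _ => h1 x)]
  rw [sum_prod_bool (fun i b => (if i ∈ S then (if b then (1:ℝ) else 0) else 1) * chi b)]
  obtain ⟨i0, hi0⟩ : ∃ i0, i0 ∉ S := by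
    by_contra h; push_neg at h; exact hS (Finset.eq_univ_iff_forall.mpr h)
  apply Finset.prod_eq_zero (Finset.mem_univ i0)
  simp [hi0, chi]

lemma momentOf_univ {m : ℕ} (f : (Fin m → Bool) → ℝ) :
    momentOf f Finset.univ = f (fun _ => true) := by
  rw [momentOf]
  have : Finset.univ.filter (fun x : Fin m → Bool => ∀ i ∈ Finset.univ, x i = true)
      = {fun _ => true} := by
    ext x
    simp only [Finset.mem_filter, Finset.mem_univ, true_and, Finset.mem_singleton]
    constructor
    · intro h; funext i; exact h i trivial
    · intro h i _; rw [h]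
  rw [this, Finset.sum_singleton]

lemma pow_halves_cancel (k M : ℕ) (h : k ≤ M) :
    ((1:ℝ)/2) ^ M * 2 ^ (M - k) = (1/2) ^ k := by
  have hM : M = k + (M - k) := by omega
  rw [hM, pow_add, Nat.add_sub_cancel_left, mul_assoc, ← mul_pow]
  norm_num

lemma zero_of_moments {m : ℕ} (B : (Fin m → Bool) → ℝ)
    (hB : ∀ S : Finset (Fin m), momentOf B S = 0) : ∀ x, B x = 0 := by
  have key : ∀ k : ℕ, ∀ x : Fin m → Bool,
      (Finset.univ.filter (fun i => x i = false)).card = k → B x = 0 := by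
    intro k
    induction k using Nat.strong_induction_on with
    | _ k ih =>
      intro x hx
      have h0 := hB (Finset.univ.filter (fun i => x i = true))
      rw [momentOf] at h0
      rw [Finset.sum_eq_single x] at h0
      · exact h0
      · intro y hy hyx
        simp only [Finset.mem_filter, Finset.mem_univ, true_and] at hy
        have hsub : (Finset.univ.filter (fun i => y i = false))
            ⊂ (Finset.univ.filter (fun i => x i = false)) := by
          constructor
          · intro i hi
            simp only [Finset.mem_filter, Finset.mem_univ, true_and] at hi ⊢
            cases hxi : x i with
            | false => rfl
            | true =>
              exact absurd (hy i (by simp [hxi])) (by simp [hi])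
          · intro hcon
            apply hyx
            funext i
            cases hxi : x i with
            | false =>
              have := hcon (Finset.mem_filter.mpr ⟨Finset.mem_univ i, hxi⟩)
              simpa using this
            | true => exact hy i (by simp [hxi])
        exact ih _ (hx ▸ Finset.card_lt_card hsub) y rfl
      · intro hxmem
        exact absurd (Finset.mem_filter.mpr ⟨Finset.mem_univ x, fun i hi => by
          simpa using (Finset.mem_filter.mp hi).2⟩) hxmem
  intro x
  exact key _ x rfl

lemma A_struct {m : ℕ} (A : (Fin m → Bool) → ℝ)
    (hA : ∀ S : Finset (Fin m), S.card < m → momentOf A S = (1/2 : ℝ) ^ S.card) :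
    ∀ x, A x = (1/2 : ℝ) ^ m
      + (A (fun _ => true) - (1/2 : ℝ) ^ m) * ∏ i, chi (x i) := by
  set δ : ℝ := A (fun _ => true) - (1/2 : ℝ) ^ m with hδ
  set B : (Fin m → Bool) → ℝ :=
    fun x => A x - ((1/2 : ℝ) ^ m + δ * ∏ i, chi (x i)) with hBdef
  have hmom : ∀ S : Finset (Fin m), momentOf B S = 0 := by
    intro S
    have hsplit : momentOf B S = momentOf A S
        - (momentOf (fun _ => (1/2 : ℝ) ^ m) S
          + δ * momentOf (fun x => ∏ i, chi (x i)) S) := by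
      simp only [momentOf, hBdef, Finset.sum_sub_distrib, Finset.sum_add_distrib,
        Finset.mul_sum]
    by_cases hScard : S.card < m
    · have hSne : S ≠ Finset.univ := by
        intro h; rw [h, Finset.card_univ, Fintype.card_fin] at hScard; omega
      rw [hsplit, hA S hScard, momentOf_const, momentOf_chiProd S hSne]
      rw [pow_halves_cancel S.card m (le_of_lt hScard)]; ring
    · have hSuniv : S = Finset.univ := by
        have h1 := Finset.card_le_univ S
        rw [Fintype.card_fin] at h1
        exact Finset.eq_univ_of_card S (by rw [Fintype.card_fin]; omega)
      rw [hsplit, hSuniv, momentOf_univ, momentOf_univ, momentOf_univ]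
      simp [chi, hδ]
  intro x
  have := zero_of_moments B hmom x
  rw [hBdef] at this
  simp only at this
  linarith

lemma prod_orderIso {n m : ℕ} (I : Finset (Fin n)) (hI : I.card = m) (f : Fin n → ℝ) :
    ∏ t : Fin m, f ((I.orderIsoOfFin hI t) : Fin n) = ∏ i ∈ I, f i := by
  rw [← Finset.prod_attach I f, ← Finset.univ_eq_attach]
  exact Equiv.prod_comp (I.orderIsoOfFin hI).toEquiv (fun a => f a.1)

lemma chiProd_pm {n : ℕ} (K : Finset (Fin n)) (x : Fin n → Bool) :
    (∏ i ∈ K, chi (x i)) = 1 ∨ (∏ i ∈ K, chi (x i)) = -1 := by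
  rw [← mul_self_eq_one_iff, ← Finset.prod_mul_distrib]
  exact Finset.prod_eq_one (fun i _ => chi_sq (x i))

lemma chiProd_mul {n : ℕ} (I J : Finset (Fin n)) (x : Fin n → Bool) :
    (∏ i ∈ I, chi (x i)) * (∏ i ∈ J, chi (x i))
      = ∏ i ∈ (I \ J) ∪ (J \ I), chi (x i) := by
  rw [← Finset.prod_inter_mul_prod_diff I J (fun i => chi (x i)),
      ← Finset.prod_inter_mul_prod_diff J I (fun i => chi (x i)),
      Finset.prod_union disjoint_sdiff_sdiff]
  have h1 : (∏ i ∈ I ∩ J, chi (x i)) * ∏ i ∈ J ∩ I, chi (x i) = 1 := by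
    rw [Finset.inter_comm J I, ← Finset.prod_mul_distrib]
    exact Finset.prod_eq_one (fun i _ => chi_sq (x i))
  calc (∏ i ∈ I ∩ J, chi (x i)) * (∏ i ∈ I \ J, chi (x i))
        * ((∏ i ∈ J ∩ I, chi (x i)) * ∏ i ∈ J \ I, chi (x i))
      = ((∏ i ∈ I ∩ J, chi (x i)) * ∏ i ∈ J ∩ I, chi (x i))
        * ((∏ i ∈ I \ J, chi (x i)) * ∏ i ∈ J \ I, chi (x i)) := by ring
    _ = (∏ i ∈ I \ J, chi (x i)) * ∏ i ∈ J \ I, chi (x i) := by rw [h1, one_mul]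

lemma sum_chiProd_zero {n : ℕ} (K : Finset (Fin n)) (hK : K.Nonempty) :
    ∑ x : Fin n → Bool, ∏ i ∈ K, chi (x i) = 0 := by
  have h1 : ∀ x : Fin n → Bool,
      (∏ i ∈ K, chi (x i)) = ∏ i, (fun i b => if i ∈ K then chi b else 1) i (x i) := by
    intro x
    rw [← Finset.prod_filter]
    congr 1
    ext i; simp
  rw [Finset.sum_congr rfl (fun x _ => h1 x),
      sum_prod_bool (fun i b => if i ∈ K then chi b else 1)]
  obtain ⟨i0, hi0⟩ := hK
  apply Finset.prod_eq_zero (Finset.mem_univ i0)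
  simp [hi0, chi]

lemma abs_pm_sub (a b : ℝ) (ha : a = 1 ∨ a = -1) (hb : b = 1 ∨ b = -1) :
    |a - b| = 1 - a * b := by
  rcases ha with h | h <;> rcases hb with h' | h' <;> subst h <;> subst h' <;> norm_num

lemma two_pow_arith (m n : ℕ) (h : m ≤ n) : ((1:ℝ)/2) ^ (n - m) * 2 ^ n = 2 ^ m := by
  obtain ⟨k, rfl⟩ : ∃ k, n = m + k := ⟨n - m, by omega⟩
  rw [Nat.add_sub_cancel_left, pow_add]
  have : ((1:ℝ)/2) ^ k * 2 ^ k = 1 := by rw [← mul_pow]; norm_num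
  calc ((1:ℝ)/2) ^ k * (2 ^ m * 2 ^ k) = (((1:ℝ)/2) ^ k * 2 ^ k) * 2 ^ m := by ring
    _ = 2 ^ m := by rw [this, one_mul]

/-- if `A` matches the uniform distribution on all moments of degree `< m`,
then for distinct `I, J` of size `m`,
`d_TV(D_I, D_J) = (1/2)·Σ_x |D_I(x) − D_J(x)| = |δ(A)|·2^{m-1}`. -/
theorem stmt_14 (n m : ℕ) (hm : 1 ≤ m) (hmn : m ≤ n)
    (A : (Fin m → Bool) → ℝ) (hA0 : ∀ x, 0 ≤ A x) (hA1 : ∑ x, A x = 1)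
    (hA : ∀ S : Finset (Fin m), S.card < m → momentOf A S = (1/2 : ℝ) ^ S.card)
    (I J : Finset (Fin n)) (hI : I.card = m) (hJ : J.card = m) (hIJ : I ≠ J) :
    (1/2 : ℝ) * ∑ x : Fin n → Bool, |embedDensity A I hI x - embedDensity A J hJ x|
      = |A (fun _ => true) - (1/2 : ℝ) ^ m| * 2 ^ (m - 1) := by
  set δ : ℝ := A (fun _ => true) - (1/2 : ℝ) ^ m with hδ
  have hstruct := A_struct A hA
  set K : Finset (Fin n) := (I \ J) ∪ (J \ I) with hK
  have hKne : K.Nonempty := by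
    rw [Finset.nonempty_iff_ne_empty]
    intro h
    rw [hK, Finset.union_eq_empty, Finset.sdiff_eq_empty_iff_subset,
      Finset.sdiff_eq_empty_iff_subset] at h
    exact hIJ (Finset.Subset.antisymm h.1 h.2)
  have habs : ∀ x : Fin n → Bool,
      |embedDensity A I hI x - embedDensity A J hJ x|
        = |δ| * ((1 - ∏ i ∈ K, chi (x i)) * (1/2 : ℝ) ^ (n - m)) := by
    intro x
    have hDI : embedDensity A I hI x
        = ((1/2 : ℝ) ^ m + δ * ∏ i ∈ I, chi (x i)) * (1/2 : ℝ) ^ (n - m) := by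
      rw [embedDensity, hstruct, prod_orderIso I hI (fun i => chi (x i))]
    have hDJ : embedDensity A J hJ x
        = ((1/2 : ℝ) ^ m + δ * ∏ i ∈ J, chi (x i)) * (1/2 : ℝ) ^ (n - m) := by
      rw [embedDensity, hstruct, prod_orderIso J hJ (fun i => chi (x i))]
    rw [hDI, hDJ]
    have hdiff : ((1/2 : ℝ) ^ m + δ * ∏ i ∈ I, chi (x i)) * (1/2 : ℝ) ^ (n - m)
        - ((1/2 : ℝ) ^ m + δ * ∏ i ∈ J, chi (x i)) * (1/2 : ℝ) ^ (n - m)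
        = δ * (((∏ i ∈ I, chi (x i)) - ∏ i ∈ J, chi (x i)) * (1/2 : ℝ) ^ (n - m)) := by
      ring
    rw [hdiff, abs_mul, abs_mul]
    congr 2
    · rw [abs_pm_sub _ _ (chiProd_pm I x) (chiProd_pm J x), chiProd_mul]
    · exact abs_of_nonneg (by positivity)
  rw [Finset.sum_congr rfl (fun x _ => habs x), ← Finset.mul_sum, ← Finset.sum_mul]
  have hsum1 : ∑ x : Fin n → Bool, (1 - ∏ i ∈ K, chi (x i)) = 2 ^ n := by
    rw [Finset.sum_sub_distrib, sum_chiProd_zero K hKne, sub_zero]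
    simp [Finset.card_univ]
  rw [hsum1, mul_comm ((2:ℝ) ^ n), two_pow_arith m n hmn]
  obtain ⟨j, rfl⟩ : ∃ j, m = j + 1 := ⟨m - 1, by omega⟩
  rw [Nat.add_sub_cancel, pow_succ]
  ring
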